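/- For all n and k, the Gaussian binomial coefficient is congruent to L(n,k) + (C(n,k) − L(n,k))·q modulo q^2 − 1, as polynomials in q with integer coefficients. -/

import Mathlib

/-
Since X² − 1 = (X − 1)(X + 1), a polynomial is congruent to a + bX modulo X² − 1 exactly when
its values at 1 and −1 are a + b and a − b. Splitting off the last letter of a word gives the
q-Pascal rule [n+1, k+1]_q = q^(k+1) [n, k+1]_q + [n, k]_q. At q = 1 this is Pascal's rule,
so the value there is C(n, k). Writing s(n, k) for the value at q = −1, two steps of it give
s(n+2, k+2) = s(n, k+2) + s(n, k), which is also the recursion that 2 L(n, k) − C(n, k)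
satisfies by the Losanitsch recursion.
-/

def losanitsch : ℕ → ℕ → ℕ
  | 0, k => if k = 0 then 1 else 0
  | 1, k => if k ≤ 1 then 1 else 0
  | n + 2, k =>
      losanitsch n k + (if k = 0 then 0 else n.choose (k - 1)) +
        (if 2 ≤ k then losanitsch n (k - 2) else 0)

def inversions {n : ℕ} (w : Fin n → Bool) : ℕ :=
  (Finset.univ.filter
    (fun p : Fin n × Fin n => p.1 < p.2 ∧ w p.1 = true ∧ w p.2 = false)).card

def words (n k : ℕ) : Finset (Fin n → Bool) :=
  Finset.univ.filter (fun w => (Finset.univ.filter (fun i => w i = true)).card = k)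

noncomputable def gaussBinom (n k : ℕ) : Polynomial ℤ :=
  ∑ w ∈ words n k, Polynomial.X ^ inversions w

open Finset Polynomial

def ones {n : ℕ} (w : Fin n → Bool) : ℕ := #{i | w i = true}

lemma ones_snoc {n : ℕ} (w : Fin n → Bool) (b : Bool) :
    ones (Fin.snoc w b : Fin (n + 1) → Bool) = ones w + b.toNat := by
  simp only [ones, card_filter, Fin.sum_univ_castSucc, Fin.snoc_castSucc, Fin.snoc_last]
  cases b <;> rfl

lemma inversions_snoc {n : ℕ} (w : Fin n → Bool) (b : Bool) :
    inversions (Fin.snoc w b : Fin (n + 1) → Bool) = inversions w + if b then 0 else ones w := by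
  have last_not_lt (i : Fin n) : ¬ Fin.last n < i.castSucc := (Fin.castSucc_lt_last i).not_gt
  simp only [inversions, ones, card_filter, Fintype.sum_prod_type, Fin.sum_univ_castSucc,
    Fin.snoc_castSucc, Fin.snoc_last, Fin.castSucc_lt_castSucc_iff, Fin.castSucc_lt_last,
    last_not_lt, lt_irrefl, true_and, false_and, if_false, sum_const_zero, add_zero,
    sum_add_distrib]
  cases b <;> simp

lemma gaussBinom_zero_right (n : ℕ) : gaussBinom n 0 = 1 := by
  have : words n 0 = {fun _ => false} := by
    ext w; simp [words, funext_iff]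
  simp [gaussBinom, this, inversions]

lemma gaussBinom_zero_succ (k : ℕ) : gaussBinom 0 (k + 1) = 0 := by
  simp [gaussBinom, words]

lemma gaussBinom_eq_sum_ite (n k : ℕ) :
    gaussBinom n k = ∑ w : Fin n → Bool, if ones w = k then X ^ inversions w else 0 := by
  rw [gaussBinom, words, sum_filter]
  rfl

lemma gaussBinom_succ_succ (n k : ℕ) :
    gaussBinom (n + 1) (k + 1) = X ^ (k + 1) * gaussBinom n (k + 1) + gaussBinom n k := by
  have snocEquiv_eq (b : Bool) (w : Fin n → Bool) :
      (Fin.snocEquiv fun _ => Bool) (b, w) = Fin.snoc w b := rfl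
  rw [gaussBinom_eq_sum_ite, ← (Fin.snocEquiv fun _ => Bool).sum_comp, Fintype.sum_prod_type,
    Fintype.sum_bool, add_comm, gaussBinom_eq_sum_ite, gaussBinom_eq_sum_ite, mul_sum]
  simp only [snocEquiv_eq, ones_snoc, inversions_snoc, Bool.toNat_true, Bool.toNat_false,
    add_zero, if_true, Bool.false_eq_true, if_false, add_left_inj]
  refine sum_congr rfl fun w _ => ?_
  split_ifs with h
  · rw [h, pow_add, mul_comm]
  · rw [mul_zero]

lemma eval_one_gaussBinom (n k : ℕ) : (gaussBinom n k).eval 1 = n.choose k := by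
  induction n generalizing k with
  | zero => cases k <;> simp [gaussBinom_zero_right, gaussBinom_zero_succ]
  | succ n ih =>
    cases k with
    | zero => simp [gaussBinom_zero_right]
    | succ k => simp [gaussBinom_succ_succ, ih, Nat.choose_succ_succ, add_comm]

lemma eval_neg_one_gaussBinom_add_two (n k : ℕ) :
    (gaussBinom (n + 2) (k + 2)).eval (-1) =
      (gaussBinom n (k + 2)).eval (-1) + (gaussBinom n k).eval (-1) := by
  simp only [gaussBinom_succ_succ, eval_add, eval_mul, eval_pow, eval_X, pow_succ]
  rcases neg_one_pow_eq_or ℤ k with h | h <;> rw [h] <;> ring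

lemma losanitsch_zero_right : ∀ n, losanitsch n 0 = 1
  | 0 => rfl
  | 1 => rfl
  | n + 2 => by simp [losanitsch, losanitsch_zero_right n]

lemma eval_neg_one_gaussBinom :
    ∀ n k, (gaussBinom n k).eval (-1) = 2 * (losanitsch n k : ℤ) - n.choose k
  | n, 0 => by simp [gaussBinom_zero_right, losanitsch_zero_right]
  | 0, k + 1 => by simp [gaussBinom_zero_succ, losanitsch]
  | 1, 1 => by simp [gaussBinom_succ_succ, gaussBinom_zero_right, gaussBinom_zero_succ, losanitsch]
  | 1, k + 2 => by
    simp [gaussBinom_succ_succ, gaussBinom_zero_succ, losanitsch, Nat.choose_succ_succ]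
  | n + 2, 1 => by
    simp [gaussBinom_succ_succ, gaussBinom_zero_right, eval_neg_one_gaussBinom n 1, losanitsch,
      Nat.choose_succ_succ']
    ring
  | n + 2, k + 2 => by
    rw [eval_neg_one_gaussBinom_add_two, eval_neg_one_gaussBinom n (k + 2),
      eval_neg_one_gaussBinom n k]
    simp only [losanitsch, Nat.choose_succ_succ']
    push_cast
    ring

lemma X_sub_C_mul_X_sub_C_dvd {R : Type*} [CommRing R] [IsDomain R] {a b : R} (hab : a ≠ b)
    {p : R[X]} (ha : p.IsRoot a) (hb : p.IsRoot b) : (X - C a) * (X - C b) ∣ p := by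
  obtain ⟨q, rfl⟩ := dvd_iff_isRoot.mpr ha
  have hq : q.IsRoot b := by
    simpa [sub_ne_zero.mpr hab.symm] using hb
  exact mul_dvd_mul_left _ (dvd_iff_isRoot.mpr hq)

open Polynomial in
theorem stmt_14 (n k : ℕ) :
    (X ^ 2 - 1 : Polynomial ℤ) ∣
      (gaussBinom n k -
        (C (losanitsch n k : ℤ) + C ((n.choose k : ℤ) - (losanitsch n k : ℤ)) * X)) := by
  have hfactor : (X ^ 2 - 1 : ℤ[X]) = (X - C 1) * (X - C (-1)) := by
    simp only [map_one, map_neg]; ring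
  rw [hfactor]
  refine X_sub_C_mul_X_sub_C_dvd (by norm_num) ?_ ?_
  · simp [eval_one_gaussBinom]
  · simp [eval_neg_one_gaussBinom]
    ring
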